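/- arXiv:2205.07484 — 8 statements merged into one kernel-verified Lean document; each statement's English description precedes it below -/
import Mathlib

section
/- Let N > m > 1 and p > (N(m-1))/(N-m). Then there exists C > 0 such that the function u(x) = C(1 + |x|^{m/(m-1)})^{-(m-1)/(p-m+1)} is a positive bounded solution of the differential inequality -Δ_m u ≥ u^p on ℝ^N, where Δ_m u = div(|∇u|^{m-2}∇u). -/
open Real

/-- Divergence of a vector field on Euclidean space. -/
noncomputable def vdiv {N : ℕ} (F : EuclideanSpace ℝ (Fin N) → EuclideanSpace ℝ (Fin N))
    (x : EuclideanSpace ℝ (Fin N)) : ℝ :=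
  ∑ i, fderiv ℝ F x (EuclideanSpace.single i 1) i

/-- The m-Laplacian `Δ_m u = div(|∇u|^{m-2} ∇u)`. -/
noncomputable def mLap {N : ℕ} (m : ℝ) (u : EuclideanSpace ℝ (Fin N) → ℝ)
    (x : EuclideanSpace ℝ (Fin N)) : ℝ :=
  vdiv (fun y => (‖gradient u y‖ ^ (m - 2)) • gradient u y) x


/-!
With `q = m / (m - 1)` the Hölder conjugate of `m` and `w = 1 + ‖x‖ ^ q`, take `u = C w ^ α`,
`α = -(m - 1) / (p - m + 1)`. Because `(q - 1) (m - 1) = 1`, the singular powers of `‖x‖` cancel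
in the flux: `‖∇u‖ ^ (m - 2) ∇u = -(C |α| q) ^ (m - 1) w ^ β x` with `β = (α - 1)(m - 1) = α p`.
The divergence of this radial field gives
`-Δ_m u = (C |α| q) ^ (m - 1) w ^ (β - 1) (N w + β q ‖x‖ ^ q) ≥ (C |α| q) ^ (m - 1) (N + β q) w ^ β`,
and `N + β q > 0` is exactly the condition `p > N (m - 1) / (N - m)`. As `u ^ p = C ^ p w ^ β`,
the inequality holds once `C ^ (p - m + 1) ≤ (|α| q) ^ (m - 1) (N + β q)`, which fixes `C`.
-/

noncomputable def mFlux {N : ℕ} (m : ℝ) (u : EuclideanSpace ℝ (Fin N) → ℝ)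
    (y : EuclideanSpace ℝ (Fin N)) : EuclideanSpace ℝ (Fin N) :=
  ‖gradient u y‖ ^ (m - 2) • gradient u y

theorem mLap_eq_vdiv_mFlux {N : ℕ} (m : ℝ) (u : EuclideanSpace ℝ (Fin N) → ℝ) :
    mLap m u = vdiv (mFlux m u) :=
  rfl

theorem vdiv_smul_self {N : ℕ} {φ : EuclideanSpace ℝ (Fin N) → ℝ}
    {φ' : EuclideanSpace ℝ (Fin N) →L[ℝ] ℝ} {x : EuclideanSpace ℝ (Fin N)}
    (h : HasFDerivAt φ φ' x) :
    vdiv (fun y => φ y • y) x = N * φ x + φ' x := by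
  have hφ' : φ' x = ∑ i, x i * φ' (EuclideanSpace.single i 1) := by
    conv_lhs => rw [← (EuclideanSpace.basisFun (Fin N) ℝ).sum_repr x]
    simp [EuclideanSpace.basisFun_apply]
  have hF : HasFDerivAt (fun y => φ y • y) (φ x • ContinuousLinearMap.id ℝ _ + φ'.smulRight x) x :=
    h.smul (hasFDerivAt_id x)
  simp [vdiv, hF.fderiv, hφ', Finset.sum_add_distrib, mul_comm]

theorem Real.HolderConjugate.sub_one_mul_sub_one {m q : ℝ} (hmq : m.HolderConjugate q) :
    (q - 1) * (m - 1) = 1 := by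
  linear_combination hmq.sub_one_mul_conj

theorem Real.HolderConjugate.rpow_mul_rpow_sub_two {m q a ρ : ℝ} (hmq : m.HolderConjugate q)
    (ha : 0 < a) (hρ : 0 < ρ) :
    (a * ρ ^ (q - 2) * ρ) ^ (m - 2) * (a * ρ ^ (q - 2)) = a ^ (m - 1) := by
  have hq : ρ ^ (q - 2) * ρ = ρ ^ (q - 1) := by
    rw [← rpow_add_one hρ.ne']; ring_nf
  rw [mul_assoc, hq, mul_rpow ha.le (by positivity), ← rpow_mul hρ.le]
  calc a ^ (m - 2) * ρ ^ ((q - 1) * (m - 2)) * (a * ρ ^ (q - 2))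
      = a ^ (m - 2 + 1) * ρ ^ ((q - 1) * (m - 2) + (q - 2)) := by
        rw [rpow_add ha, rpow_add hρ, rpow_one]; ring
    _ = a ^ (m - 1) := by
        rw [show (q - 1) * (m - 2) + (q - 2) = (q - 1) * (m - 1) - 1 by ring,
          hmq.sub_one_mul_sub_one, show m - 2 + 1 = m - 1 by ring]
        norm_num

section
variable {E : Type*} [NormedAddCommGroup E] [InnerProductSpace ℝ E]

theorem contDiff_const_mul_one_add_norm_rpow_rpow (c α : ℝ) {q : ℝ} (hq : 1 < q) :
    ContDiff ℝ 1 (fun x : E => c * (1 + ‖x‖ ^ q) ^ α) :=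
  contDiff_const.mul <| (contDiff_const.add (contDiff_norm_rpow hq)).rpow_const_of_ne
    fun x => by positivity

theorem hasGradientAt_const_mul_one_add_norm_rpow_rpow [CompleteSpace E] (c α : ℝ) {q : ℝ}
    (hq : 1 < q) (y : E) :
    HasGradientAt (fun x : E => c * (1 + ‖x‖ ^ q) ^ α)
      ((c * α * q * ‖y‖ ^ (q - 2) * (1 + ‖y‖ ^ q) ^ (α - 1)) • y) y := by
  have hw : 1 + ‖y‖ ^ q ≠ 0 := by positivity
  have h := (((hasFDerivAt_norm_rpow y hq).const_add 1).rpow_const (p := α) (.inl hw)).const_mul c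
  rw [hasGradientAt_iff_hasFDerivAt]
  refine h.congr_fderiv (ContinuousLinearMap.ext fun z => ?_)
  simp only [smul_apply, coe_innerSL_apply, smul_eq_mul,
    InnerProductSpace.toDual_apply_apply, real_inner_smul_left]
  ring

end

theorem mFlux_const_mul_one_add_norm_rpow_rpow {N : ℕ} {m q α c : ℝ}
    (hmq : m.HolderConjugate q) (hc : 0 < c) (hα : α < 0) :
    mFlux m (fun x : EuclideanSpace ℝ (Fin N) => c * (1 + ‖x‖ ^ q) ^ α) =
      fun y => (-(c * -α * q) ^ (m - 1) * (1 + ‖y‖ ^ q) ^ ((α - 1) * (m - 1))) • y := by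
  ext1 y
  rw [mFlux, (hasGradientAt_const_mul_one_add_norm_rpow_rpow c α hmq.symm.lt y).gradient]
  rcases eq_or_ne y 0 with rfl | hy
  · simp
  have hw : 0 < 1 + ‖y‖ ^ q := by positivity
  have hα' : 0 < -α := neg_pos.2 hα
  have hq : 0 < q := hmq.symm.pos
  set a := c * -α * q * (1 + ‖y‖ ^ q) ^ (α - 1)
  have ha : 0 < a := by positivity
  have hs : c * α * q * ‖y‖ ^ (q - 2) * (1 + ‖y‖ ^ q) ^ (α - 1) = -(a * ‖y‖ ^ (q - 2)) := by ring
  have hnorm : ‖(a * ‖y‖ ^ (q - 2)) • y‖ = a * ‖y‖ ^ (q - 2) * ‖y‖ := by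
    rw [norm_smul, Real.norm_of_nonneg (by positivity)]
  have ha' : a ^ (m - 1) = (c * -α * q) ^ (m - 1) * (1 + ‖y‖ ^ q) ^ ((α - 1) * (m - 1)) := by
    rw [mul_rpow (by positivity) (by positivity), ← rpow_mul hw.le]
  rw [hs, smul_smul, neg_smul, norm_neg, hnorm, mul_neg,
    hmq.rpow_mul_rpow_sub_two ha (norm_pos_iff.2 hy), ha', neg_mul]

theorem mLap_const_mul_one_add_norm_rpow_rpow {N : ℕ} {m q α c : ℝ} (hmq : m.HolderConjugate q)
    (hc : 0 < c) (hα : α < 0) (x : EuclideanSpace ℝ (Fin N)) :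
    mLap m (fun y => c * (1 + ‖y‖ ^ q) ^ α) x =
      -((c * -α * q) ^ (m - 1) * (1 + ‖x‖ ^ q) ^ ((α - 1) * (m - 1) - 1) *
        (N * (1 + ‖x‖ ^ q) + (α - 1) * (m - 1) * q * ‖x‖ ^ q)) := by
  set k := -(c * -α * q) ^ (m - 1)
  set β := (α - 1) * (m - 1)
  have hq : 1 < q := hmq.symm.lt
  have hnorm : ‖x‖ ^ (q - 2) * ‖x‖ ^ 2 = ‖x‖ ^ q := by
    rw [← rpow_natCast, ← rpow_add' (norm_nonneg x) (by push_cast; linarith)]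
    norm_num
  have hw : (1 + ‖x‖ ^ q) ^ β = (1 + ‖x‖ ^ q) ^ (β - 1) * (1 + ‖x‖ ^ q) := by
    rw [← rpow_add_one (by positivity)]; ring_nf
  rw [mLap_eq_vdiv_mFlux, mFlux_const_mul_one_add_norm_rpow_rpow hmq hc hα,
    vdiv_smul_self (hasGradientAt_const_mul_one_add_norm_rpow_rpow k β hq x).hasFDerivAt]
  simp only [InnerProductSpace.toDual_apply_apply, real_inner_smul_left, real_inner_self_eq_norm_sq]
  rw [hw]
  linear_combination k * β * q * (1 + ‖x‖ ^ q) ^ (β - 1) * hnorm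

theorem rpow_le_neg_mLap_const_mul_one_add_norm_rpow_rpow {N : ℕ} {m p q α c : ℝ}
    (hmq : m.HolderConjugate q) (hc : 0 < c) (hα : α < 0) (hαp : α * p = (α - 1) * (m - 1))
    (hcM : c ^ (p - m + 1) ≤ (-α * q) ^ (m - 1) * (N + (α - 1) * (m - 1) * q))
    (x : EuclideanSpace ℝ (Fin N)) :
    (c * (1 + ‖x‖ ^ q) ^ α) ^ p ≤ -mLap m (fun y => c * (1 + ‖y‖ ^ q) ^ α) x := by
  rw [mLap_const_mul_one_add_norm_rpow_rpow hmq hc hα, neg_neg]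
  set β := (α - 1) * (m - 1)
  set r := ‖x‖ ^ q
  have hr : 0 ≤ r := by positivity
  have hw : 0 < 1 + r := by positivity
  have hα' : 0 < -α := neg_pos.2 hα
  have hq : 0 < q := hmq.symm.pos
  have hβ : β * q ≤ 0 := by
    have : β < 0 := mul_neg_of_neg_of_pos (by linarith) hmq.sub_one_pos
    nlinarith
  have hlhs : (c * (1 + r) ^ α) ^ p =
      c ^ (m - 1) * (1 + r) ^ (β - 1) * (c ^ (p - m + 1) * (1 + r)) := by
    rw [mul_rpow hc.le (by positivity), ← rpow_mul hw.le, hαp,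
      show c ^ p = c ^ (m - 1) * c ^ (p - m + 1) by rw [← rpow_add hc]; ring_nf,
      show (1 + r) ^ β = (1 + r) ^ (β - 1) * (1 + r) by rw [← rpow_add_one hw.ne']; ring_nf]
    ring
  calc (c * (1 + r) ^ α) ^ p
      = c ^ (m - 1) * (1 + r) ^ (β - 1) * (c ^ (p - m + 1) * (1 + r)) := hlhs
    _ ≤ c ^ (m - 1) * (1 + r) ^ (β - 1) * ((-α * q) ^ (m - 1) * (N + β * q) * (1 + r)) := by
        gcongr
    _ ≤ c ^ (m - 1) * (1 + r) ^ (β - 1) * ((-α * q) ^ (m - 1) * (N * (1 + r) + β * q * r)) := by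
        rw [mul_assoc ((-α * q) ^ (m - 1))]
        gcongr
        nlinarith
    _ = (c * -α * q) ^ (m - 1) * (1 + r) ^ (β - 1) * (N * (1 + r) + β * q * r) := by
        rw [mul_assoc c, mul_rpow hc.le (by positivity)]; ring

theorem sub_one_lt_of_serrin_lt {N m p : ℝ} (hm : 1 < m) (hmN : m < N) (hp : N * (m - 1) / (N - m) < p) :
    m - 1 < p := by
  rw [div_lt_iff₀ (by linarith)] at hp
  nlinarith

theorem serrin_margin_pos {N m p : ℝ} (hm : 1 < m) (hmN : m < N) (hp : N * (m - 1) / (N - m) < p) :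
    0 < N + (-(m - 1) / (p - m + 1) - 1) * m := by
  have hpm : 0 < p - m + 1 := by linarith [sub_one_lt_of_serrin_lt hm hmN hp]
  rw [div_lt_iff₀ (by linarith)] at hp
  have key : m * (m - 1) < (N - m) * (p - m + 1) := by linarith
  rw [div_sub_one hpm.ne', div_mul_eq_mul_div, add_div' _ _ _ hpm.ne', div_pos_iff_of_pos_right hpm]
  linarith

theorem stmt0 (N : ℕ) (m p : ℝ) (hm : 1 < m) (hmN : m < N)
    (hp : N * (m - 1) / (N - m) < p) :
    ∃ C > (0 : ℝ),
      (∀ x : EuclideanSpace ℝ (Fin N),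
        0 < C * (1 + ‖x‖ ^ (m / (m - 1))) ^ (-(m - 1) / (p - m + 1))) ∧
      (∃ B : ℝ, ∀ x : EuclideanSpace ℝ (Fin N),
        C * (1 + ‖x‖ ^ (m / (m - 1))) ^ (-(m - 1) / (p - m + 1)) ≤ B) ∧
      ContDiff ℝ 1 (fun x : EuclideanSpace ℝ (Fin N) =>
        C * (1 + ‖x‖ ^ (m / (m - 1))) ^ (-(m - 1) / (p - m + 1))) ∧
      (∀ x : EuclideanSpace ℝ (Fin N),
        (C * (1 + ‖x‖ ^ (m / (m - 1))) ^ (-(m - 1) / (p - m + 1))) ^ p ≤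
          -mLap m (fun y : EuclideanSpace ℝ (Fin N) =>
            C * (1 + ‖y‖ ^ (m / (m - 1))) ^ (-(m - 1) / (p - m + 1))) x) := by
  have hmq : m.HolderConjugate (m / (m - 1)) := .conjExponent hm
  have hpm : 0 < p - m + 1 := by linarith [sub_one_lt_of_serrin_lt hm hmN hp]
  set q := m / (m - 1)
  set α := -(m - 1) / (p - m + 1)
  have hα : α < 0 := div_neg_of_neg_of_pos (by linarith) hpm
  have hαp : α * p = (α - 1) * (m - 1) := by simp only [α]; field_simp; ring
  have hN : 0 < N + (α - 1) * (m - 1) * q := by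
    rw [mul_assoc, hmq.sub_one_mul_conj]
    exact serrin_margin_pos hm hmN hp
  set M := (-α * q) ^ (m - 1) * (N + (α - 1) * (m - 1) * q)
  have hM : 0 < M := by have := neg_pos.2 hα; have := hmq.symm.pos; positivity
  set C := M ^ (1 / (p - m + 1))
  have hC : 0 < C := by positivity
  have hCM : C ^ (p - m + 1) = M := by
    rw [← rpow_mul hM.le, one_div_mul_cancel hpm.ne', rpow_one]
  refine ⟨C, hC, fun x => by positivity, ⟨C, fun x => ?_⟩,
    contDiff_const_mul_one_add_norm_rpow_rpow C α hmq.symm.lt,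
    rpow_le_neg_mLap_const_mul_one_add_norm_rpow_rpow hmq hC hα hαp hCM.le⟩
  exact mul_le_of_le_one_right hC.le (rpow_le_one_of_one_le_of_nonpos (le_add_of_nonneg_right (by positivity)) hα.le)
end

section
/- Let m > 1, p > m-1, p > 1, a > 0, and set q = mp/(p+1). Define M₊ = (p+1)(p-1)^{(p-1)/(p+1)} / (4ap)^{p/(p+1)} and, for u > 0, Z > 0, ψ(Z) = u^p + B Z^{mp/(p+1)} - √(p/a) u^{(p-1)/2} Z^{m/2}. If B ≥ M₊, then ψ(Z) ≥ 0 for all Z > 0. -/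
open Real

theorem stmt4 (m p a u B : ℝ) (hm : 1 < m) (hpm : m - 1 < p) (hp1 : 1 < p)
    (ha : 0 < a) (hu : 0 < u)
    (hB : (p + 1) * (p - 1) ^ ((p - 1) / (p + 1)) / (4 * a * p) ^ (p / (p + 1)) ≤ B) :
    ∀ Z : ℝ, 0 < Z →
      0 ≤ u ^ p + B * Z ^ (m * p / (p + 1))
          - Real.sqrt (p / a) * u ^ ((p - 1) / 2) * Z ^ (m / 2) := by
  intro Z hZ
  have hp0 : (0:ℝ) < p := by linarith
  have hpm1 : (0:ℝ) < p - 1 := by linarith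
  have hpp1 : (0:ℝ) < p + 1 := by linarith
  set w₁ : ℝ := (p - 1) / (2 * p) with hw1d
  set w₂ : ℝ := (p + 1) / (2 * p) with hw2d
  have hw₁ : 0 < w₁ := div_pos hpm1 (by linarith)
  have hw₂ : 0 < w₂ := div_pos hpp1 (by linarith)
  have hw : w₁ + w₂ = 1 := by rw [hw1d, hw2d]; field_simp; ring
  set M : ℝ := (p + 1) * (p - 1) ^ ((p - 1) / (p + 1)) / (4 * a * p) ^ (p / (p + 1))
    with hMd
  have hM0 : 0 < M := by
    apply div_pos (mul_pos hpp1 (rpow_pos_of_pos hpm1 _))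
    exact rpow_pos_of_pos (by positivity) _
  set P₁ : ℝ := u ^ p / w₁ with hP1d
  set P₂ : ℝ := M * Z ^ (m * p / (p + 1)) / w₂ with hP2d
  have hP₁ : 0 < P₁ := div_pos (rpow_pos_of_pos hu p) hw₁
  have hP₂ : 0 < P₂ := div_pos (mul_pos hM0 (rpow_pos_of_pos hZ _)) hw₂
  have key : P₁ ^ w₁ * P₂ ^ w₂ ≤ w₁ * P₁ + w₂ * P₂ :=
    Real.geom_mean_le_arith_mean2_weighted hw₁.le hw₂.le hP₁.le hP₂.le hw
  have h4 : Real.log 4 = 2 * Real.log 2 := by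
    rw [show (4:ℝ) = 2 ^ (2:ℕ) by norm_num, Real.log_pow]; push_cast; ring
  have heq : P₁ ^ w₁ * P₂ ^ w₂
      = Real.sqrt (p / a) * u ^ ((p - 1) / 2) * Z ^ (m / 2) := by
    have hLpos : 0 < P₁ ^ w₁ * P₂ ^ w₂ := by positivity
    have hRpos : 0 < Real.sqrt (p / a) * u ^ ((p - 1) / 2) * Z ^ (m / 2) := by
      have : 0 < Real.sqrt (p / a) := Real.sqrt_pos.mpr (by positivity)
      positivity
    have hlogM : Real.log M = Real.log (p + 1) + (p - 1) / (p + 1) * Real.log (p - 1)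
        - p / (p + 1) * (2 * Real.log 2 + Real.log a + Real.log p) := by
      rw [hMd, Real.log_div (by positivity) (by positivity),
        Real.log_mul hpp1.ne' (by positivity),
        Real.log_rpow hpm1,
        Real.log_rpow (by positivity : (0:ℝ) < 4 * a * p),
        Real.log_mul (by positivity) hp0.ne',
        Real.log_mul (by norm_num : (4:ℝ) ≠ 0) ha.ne', h4]
    have hlogw1 : Real.log w₁ = Real.log (p - 1) - (Real.log 2 + Real.log p) := by
      rw [hw1d, Real.log_div hpm1.ne' (by positivity : ((2:ℝ) * p) ≠ 0),
        Real.log_mul (by norm_num : (2:ℝ) ≠ 0) hp0.ne']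
    have hlogw2 : Real.log w₂ = Real.log (p + 1) - (Real.log 2 + Real.log p) := by
      rw [hw2d, Real.log_div hpp1.ne' (by positivity : ((2:ℝ) * p) ≠ 0),
        Real.log_mul (by norm_num : (2:ℝ) ≠ 0) hp0.ne']
    have hL : Real.log (P₁ ^ w₁ * P₂ ^ w₂)
        = Real.log (Real.sqrt (p / a) * u ^ ((p - 1) / 2) * Z ^ (m / 2)) := by
      rw [Real.log_mul (by positivity) (by positivity),
        Real.log_rpow hP₁, Real.log_rpow hP₂, hP1d, hP2d,
        Real.log_div (by positivity) hw₁.ne',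
        Real.log_div (by positivity) hw₂.ne',
        Real.log_rpow hu,
        Real.log_mul hM0.ne' (by positivity),
        Real.log_rpow hZ, hlogM, hlogw1, hlogw2,
        Real.log_mul (by positivity) (by positivity),
        Real.log_mul (by positivity) (by positivity),
        Real.log_sqrt (by positivity),
        Real.log_div hp0.ne' ha.ne',
        Real.log_rpow hu, Real.log_rpow hZ]
      have hpne : p ≠ 0 := hp0.ne'
      rw [hw1d, hw2d]
      field_simp
      ring
    calc P₁ ^ w₁ * P₂ ^ w₂ = Real.exp (Real.log (P₁ ^ w₁ * P₂ ^ w₂)) :=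
          (Real.exp_log hLpos).symm
      _ = Real.exp (Real.log (Real.sqrt (p / a) * u ^ ((p - 1) / 2) * Z ^ (m / 2))) := by
          rw [hL]
      _ = _ := Real.exp_log hRpos
  have h1 : w₁ * P₁ = u ^ p := by
    rw [hP1d]; field_simp
  have h2 : w₂ * P₂ = M * Z ^ (m * p / (p + 1)) := by
    rw [hP2d]; field_simp
  have h3 : M * Z ^ (m * p / (p + 1)) ≤ B * Z ^ (m * p / (p + 1)) :=
    mul_le_mul_of_nonneg_right hB (rpow_pos_of_pos hZ _).le
  rw [heq] at key
  linarith [key, h1, h2, h3]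
end

section
/- Let m > 1, p > max{m-1,1}, q = mp/(p+1), a > 0, u > 0, and M₊ = (p+1)(p-1)^{(p-1)/(p+1)}/(4ap)^{p/(p+1)}. Then for every Z ≥ 0 (with Z = |∇u| treated as a nonnegative real), (u^p Z^{2-m} + M₊ Z^{q-m+2})² - (p/a) u^{p-1} Z^{4-m} ≥ 0 for all Z > 0. -/
/-!
Dividing by `Z ^ (2 * (2 - m))` turns the claim into `S ^ 2 ≥ D ^ 2` with
`S = u ^ p + M₊ Z ^ q` and `D = √(p / a) u ^ ((p - 1) / 2) Z ^ (m / 2)`. Weighted AM-GM with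
weights `(p - 1) / (2p)` and `(p + 1) / (2p)` applied to `u ^ p` and `Z ^ q` gives `D ≤ S`;
`M₊` is exactly the constant for which the AM-GM constant equals `√(p / a)`.
-/

open Real

noncomputable def mPlus (p a : ℝ) : ℝ :=
  (p + 1) * (p - 1) ^ ((p - 1) / (p + 1)) / (4 * a * p) ^ (p / (p + 1))

theorem rpow_mul_rpow_le_add {A B X Y M : ℝ} (hA : 0 < A) (hB : 0 < B) (hAB : A + B = 1)
    (hX : 0 ≤ X) (hY : 0 ≤ Y) (hM : 0 ≤ M) :
    A⁻¹ ^ A * (M / B) ^ B * (X ^ A * Y ^ B) ≤ X + M * Y := by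
  have h := geom_mean_le_arith_mean2_weighted hA.le hB.le (mul_nonneg (inv_nonneg.2 hA.le) hX)
    (mul_nonneg (div_nonneg hM hB.le) hY) hAB
  rw [mul_rpow (inv_nonneg.2 hA.le) hX, mul_rpow (div_nonneg hM hB.le) hY] at h
  calc A⁻¹ ^ A * (M / B) ^ B * (X ^ A * Y ^ B) = A⁻¹ ^ A * X ^ A * ((M / B) ^ B * Y ^ B) := by
        ring
    _ ≤ A * (A⁻¹ * X) + B * (M / B * Y) := h
    _ = X + M * Y := by field_simp

theorem mPlus_nonneg {p a : ℝ} (hp : 1 < p) (ha : 0 < a) : 0 ≤ mPlus p a := by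
  have : 0 < p - 1 := by linarith
  unfold mPlus
  positivity

theorem inv_rpow_mul_mPlus_div_rpow_eq_sqrt {p a : ℝ} (hp : 1 < p) (ha : 0 < a) :
    ((p - 1) / (2 * p))⁻¹ ^ ((p - 1) / (2 * p)) *
      (mPlus p a / ((p + 1) / (2 * p))) ^ ((p + 1) / (2 * p)) = √(p / a) := by
  have hp0 : 0 < p := by linarith
  have hs : 0 < p - 1 := by linarith
  have hM : mPlus p a / ((p + 1) / (2 * p))
      = 2 * p * (p - 1) ^ ((p - 1) / (p + 1)) / (4 * a * p) ^ (p / (p + 1)) := by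
    unfold mPlus
    field_simp
  rw [hM, inv_div, div_rpow (by positivity) hs.le, div_rpow (by positivity) (by positivity),
    mul_rpow (x := 2 * p) (by positivity) (by positivity), ← rpow_mul hs.le,
    ← rpow_mul (by positivity)]
  have e1 : (p - 1) / (p + 1) * ((p + 1) / (2 * p)) = (p - 1) / (2 * p) := by field_simp
  have e2 : p / (p + 1) * ((p + 1) / (2 * p)) = 1 / 2 := by field_simp
  have h2p : (2 * p) ^ ((p - 1) / (2 * p)) * (2 * p) ^ ((p + 1) / (2 * p)) = 2 * p := by
    rw [← rpow_add (by positivity), ← add_div, show p - 1 + (p + 1) = 2 * p by ring,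
      div_self (by positivity), rpow_one]
  have : 0 < (p - 1) ^ ((p - 1) / (2 * p)) := by positivity
  calc _ = (2 * p) ^ ((p - 1) / (2 * p)) * (2 * p) ^ ((p + 1) / (2 * p)) / √(4 * a * p) := by
        rw [e1, e2, ← sqrt_eq_rpow]; field_simp
    _ = √((2 * p) ^ 2) / √(4 * a * p) := by rw [h2p, sqrt_sq (by positivity)]
    _ = √(p / a) := by rw [← sqrt_div' _ (by positivity)]; congr 1; field_simp; ring

theorem sqrt_mul_rpow_le_add_mPlus_mul_rpow {m p a u Z : ℝ} (hp : 1 < p) (ha : 0 < a)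
    (hu : 0 ≤ u) (hZ : 0 ≤ Z) :
    √(p / a) * u ^ ((p - 1) / 2) * Z ^ (m / 2) ≤ u ^ p + mPlus p a * Z ^ (m * p / (p + 1)) := by
  have hp0 : 0 < p := by linarith
  have hs : 0 < p - 1 := by linarith
  have hAMGM := rpow_mul_rpow_le_add (A := (p - 1) / (2 * p)) (B := (p + 1) / (2 * p))
    (X := u ^ p) (Y := Z ^ (m * p / (p + 1))) (by positivity) (by positivity)
    (by field_simp; ring) (by positivity) (by positivity) (mPlus_nonneg hp ha)
  rwa [inv_rpow_mul_mPlus_div_rpow_eq_sqrt hp ha, ← rpow_mul hu, ← rpow_mul hZ,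
    show p * ((p - 1) / (2 * p)) = (p - 1) / 2 by field_simp,
    show m * p / (p + 1) * ((p + 1) / (2 * p)) = m / 2 by field_simp, ← mul_assoc] at hAMGM

theorem sq_add_rpow_sub_rpow_eq {Z : ℝ} (hZ : 0 < Z) (α β γ m q : ℝ) :
    (α * Z ^ (2 - m) + β * Z ^ (q - m + 2)) ^ 2 - γ * Z ^ (4 - m)
      = (Z ^ (2 - m)) ^ 2 * ((α + β * Z ^ q) ^ 2 - γ * Z ^ m) := by
  have e1 : Z ^ (q - m + 2) = Z ^ q * Z ^ (2 - m) := by rw [← rpow_add hZ]; ring_nf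
  have e2 : Z ^ (4 - m) = Z ^ m * (Z ^ (2 - m)) ^ 2 := by
    rw [← rpow_natCast, ← rpow_mul hZ.le, ← rpow_add hZ]; ring_nf
  rw [e1, e2]
  ring

theorem stmt5_general (m p a u q Mplus : ℝ) (hp1 : 1 < p)
    (ha : 0 < a) (hu : 0 < u)
    (hq : q = m * p / (p + 1))
    (hM : Mplus = (p + 1) * (p - 1) ^ ((p - 1) / (p + 1)) / (4 * a * p) ^ (p / (p + 1))) :
    ∀ Z : ℝ, 0 < Z →
      0 ≤ (u ^ p * Z ^ (2 - m) + Mplus * Z ^ (q - m + 2)) ^ 2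
          - (p / a) * u ^ (p - 1) * Z ^ (4 - m) := by
  intro Z hZ
  obtain rfl : Mplus = mPlus p a := hM
  subst hq
  have hDS := sqrt_mul_rpow_le_add_mPlus_mul_rpow (m := m) hp1 ha hu.le hZ.le
  have hD_sq : (√(p / a) * u ^ ((p - 1) / 2) * Z ^ (m / 2)) ^ 2 = p / a * u ^ (p - 1) * Z ^ m := by
    rw [mul_pow, mul_pow, sq_sqrt (by positivity), ← rpow_natCast, ← rpow_natCast,
      ← rpow_mul hu.le, ← rpow_mul hZ.le]
    norm_num
  rw [sq_add_rpow_sub_rpow_eq hZ, ← hD_sq]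
  exact mul_nonneg (sq_nonneg _) (sub_nonneg.2 (pow_le_pow_left₀ (by positivity) hDS 2))

theorem stmt5 (m p a u q Mplus : ℝ) (hm : 1 < m) (hpm : m - 1 < p) (hp1 : 1 < p)
    (ha : 0 < a) (hu : 0 < u)
    (hq : q = m * p / (p + 1))
    (hM : Mplus = (p + 1) * (p - 1) ^ ((p - 1) / (p + 1)) / (4 * a * p) ^ (p / (p + 1))) :
    ∀ Z : ℝ, 0 < Z →
      0 ≤ (u ^ p * Z ^ (2 - m) + Mplus * Z ^ (q - m + 2)) ^ 2
          - (p / a) * u ^ (p - 1) * Z ^ (4 - m) :=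
  stmt5_general m p a u q Mplus hp1 ha hu hq hM
end

section
/- Let m > 1, p > m-1, q = mp/(p+1), and M a real number with |M| ≤ μ*(m) := (p+1)((m-1)/p)^{p/(p+1)}. For v > 0 define F(X) = (m-1)X + e^{(p-m+1)v} + M e^{(q-m+1)v} X^{p/(p+1)} for X ≥ 0. Then F(X) ≥ 0 for all X ≥ 0. -/
open Real

/-! Since `q - m + 1 = (p - m + 1) / (p + 1)`, the middle exponential is `E ^ (1 / (p + 1))` with
`E = exp ((p - m + 1) v)`. Weighted AM–GM with weights `p / (p + 1)` and `1 / (p + 1)`, applied to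
`(m - 1)(p + 1) X / p` and `(p + 1) E`, gives
`(m - 1) X + E ≥ μ*(m) E ^ (1 / (p + 1)) X ^ (p / (p + 1))`, and `|M| ≤ μ*(m)` absorbs the last term. -/

theorem young_rpow_le_mul_add {p c E X : ℝ} (hp : 0 < p) (hc : 0 ≤ c) (hE : 0 ≤ E) (hX : 0 ≤ X) :
    (p + 1) * (c / p) ^ (p / (p + 1)) * E ^ (1 / (p + 1)) * X ^ (p / (p + 1)) ≤ c * X + E := by
  have hp1 : 0 < p + 1 := by linarith
  have hcp : 0 ≤ c / p := div_nonneg hc hp.le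
  have hweights : p / (p + 1) + 1 / (p + 1) = 1 := by field_simp
  have hamgm := geom_mean_le_arith_mean2_weighted (by positivity) (by positivity)
    (mul_nonneg (mul_nonneg hcp hX) hp1.le) (mul_nonneg hp1.le hE) hweights
  have hsplit : (p + 1) ^ (p / (p + 1)) * (p + 1) ^ (1 / (p + 1)) = p + 1 := by
    rw [← rpow_add hp1, hweights, rpow_one]
  calc (p + 1) * (c / p) ^ (p / (p + 1)) * E ^ (1 / (p + 1)) * X ^ (p / (p + 1))
      = (c / p * X * (p + 1)) ^ (p / (p + 1)) * ((p + 1) * E) ^ (1 / (p + 1)) := by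
        rw [mul_rpow (mul_nonneg hcp hX) hp1.le, mul_rpow hcp hX, mul_rpow hp1.le hE]
        linear_combination (c / p) ^ (p / (p + 1)) * E ^ (1 / (p + 1)) * X ^ (p / (p + 1)) * hsplit.symm
    _ ≤ p / (p + 1) * (c / p * X * (p + 1)) + 1 / (p + 1) * ((p + 1) * E) := hamgm
    _ = c * X + E := by field_simp

theorem exp_mul_eq_exp_mul_rpow_inv_succ {p m q : ℝ} (hp : p + 1 ≠ 0) (hq : q = m * p / (p + 1)) (v : ℝ) :
    exp ((q - m + 1) * v) = exp ((p - m + 1) * v) ^ (1 / (p + 1)) := by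
  rw [← exp_mul, hq]
  congr 1
  field_simp
  ring

theorem stmt7_general (m p q M v : ℝ) (hm : 1 < m) (hp : m - 1 < p)
    (hq : q = m * p / (p + 1))
    (hM : |M| ≤ (p + 1) * ((m - 1) / p) ^ (p / (p + 1))) :
    ∀ X : ℝ, 0 ≤ X →
      0 ≤ (m - 1) * X + Real.exp ((p - m + 1) * v)
          + M * Real.exp ((q - m + 1) * v) * X ^ (p / (p + 1)) := by
  intro X hX
  have hp0 : 0 < p := by linarith
  rw [exp_mul_eq_exp_mul_rpow_inv_succ (by linarith) hq]
  set E := exp ((p - m + 1) * v)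
  have hyoung := young_rpow_le_mul_add (c := m - 1) hp0 (by linarith) (exp_pos ((p - m + 1) * v)).le hX
  have hneg : -(|M| * E ^ (1 / (p + 1)) * X ^ (p / (p + 1))) ≤
      M * E ^ (1 / (p + 1)) * X ^ (p / (p + 1)) := by
    rw [← neg_mul, ← neg_mul]
    gcongr
    exact neg_abs_le M
  have hbound : |M| * E ^ (1 / (p + 1)) * X ^ (p / (p + 1)) ≤
      (p + 1) * ((m - 1) / p) ^ (p / (p + 1)) * E ^ (1 / (p + 1)) * X ^ (p / (p + 1)) := by
    gcongr
  linarith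

theorem stmt7 (m p q M v : ℝ) (hm : 1 < m) (hp : m - 1 < p)
    (hq : q = m * p / (p + 1))
    (hM : |M| ≤ (p + 1) * ((m - 1) / p) ^ (p / (p + 1)))
    (hv : 0 < v) :
    ∀ X : ℝ, 0 ≤ X →
      0 ≤ (m - 1) * X + Real.exp ((p - m + 1) * v)
          + M * Real.exp ((q - m + 1) * v) * X ^ (p / (p + 1)) :=
  stmt7_general m p q M v hm hp hq hM
end

section
/- Let N > 1, m > 1, 0 < R₁ < R₂, and d = (N-1)(R₂-R₁)/((m-1)R₁) + 1. Then the function w(x) = (R₂ - |x|)^d defined on the annulus A = {x ∈ ℝ^N : R₁ < |x| < R₂} satisfies -Δ_m w ≤ 0 in A, w ≤ (R₂-R₁)^d on {|x| = R₁}, and w = 0 on {|x| = R₂}. -/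
/-!
For a radial function `w = f(|x|)` the flux `|∇w|^{m-2} ∇w` is `(g(r)/r) x` with
`g = |f'|^{m-2} f'`, whose divergence is `g'(r) + (N-1) g(r)/r`. For `f(r) = (R₂ - r)^d` one has
`g(r) = -d^{m-1} (R₂ - r)^α` with `α = (d-1)(m-1)`, hence
`Δ_m w = d^{m-1} (R₂ - r)^{α-1} (α - (N-1)(R₂ - r)/r)`.
The choice of `d` makes `α = (N-1)(R₂ - R₁)/R₁`, which dominates `(N-1)(R₂ - r)/r` on the annulus
because `(R₂ - r)/r` is decreasing.
-/

open Real

open Filter Topology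

section Radial

variable {E : Type*} [NormedAddCommGroup E] [InnerProductSpace ℝ E]

theorem hasFDerivAt_norm_of_ne_zero {x : E} (hx : x ≠ 0) :
    HasFDerivAt (‖·‖) (‖x‖⁻¹ • innerSL ℝ x) x := by
  have hsq : HasFDerivAt (fun y : E => √(‖y‖ ^ 2)) ((1 / (2 * √(‖x‖ ^ 2))) • 2 • innerSL ℝ x) x :=
    (hasStrictFDerivAt_norm_sq x).hasFDerivAt.sqrt (by positivity)
  simp only [sqrt_sq (norm_nonneg _)] at hsq
  convert hsq using 1
  ext v
  simp only [smul_apply, coe_innerSL_apply, smul_eq_mul, one_div, mul_inv_rev, nsmul_eq_mul,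
    Nat.cast_ofNat]
  field_simp

theorem HasDerivAt.hasGradientAt_comp_norm [CompleteSpace E] {φ : ℝ → ℝ} {φ' : ℝ} {x : E}
    (hφ : HasDerivAt φ φ' ‖x‖) (hx : x ≠ 0) :
    HasGradientAt (fun y => φ ‖y‖) ((φ' / ‖x‖) • x) x := by
  rw [hasGradientAt_iff_hasFDerivAt]
  refine (hφ.comp_hasFDerivAt x (hasFDerivAt_norm_of_ne_zero hx)).congr_fderiv ?_
  ext v
  simp only [smul_apply, coe_innerSL_apply, smul_eq_mul, map_smul,
    InnerProductSpace.toDual_apply_apply]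
  ring

end Radial

theorem vdiv_radial {N : ℕ} {G : EuclideanSpace ℝ (Fin N) → EuclideanSpace ℝ (Fin N)}
    {ψ : ℝ → ℝ} {ψ' : ℝ} {x : EuclideanSpace ℝ (Fin N)} (hx : x ≠ 0)
    (hψ : HasDerivAt ψ ψ' ‖x‖) (hG : G =ᶠ[𝓝 x] fun y => ψ ‖y‖ • y) :
    vdiv G x = N * ψ ‖x‖ + ‖x‖ * ψ' := by
  have hfd : HasFDerivAt (fun y => ψ ‖y‖ • y) (ψ ‖x‖ • ContinuousLinearMap.id ℝ _ +
      (ψ' • ‖x‖⁻¹ • innerSL ℝ x).smulRight x) x :=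
    (hψ.comp_hasFDerivAt x (hasFDerivAt_norm_of_ne_zero hx)).smul (hasFDerivAt_id x)
  rw [vdiv, hG.fderiv_eq, hfd.fderiv]
  simp only [add_apply, smul_apply, ContinuousLinearMap.id_apply,
    ContinuousLinearMap.smulRight_apply, coe_innerSL_apply, EuclideanSpace.inner_single_right,
    ringHom_apply, one_mul, smul_eq_mul, PiLp.add_apply, PiLp.smul_apply, PiLp.single_eq_same,
    mul_one, mul_assoc, ← sq, Finset.sum_add_distrib, Finset.sum_const, Finset.card_univ,
    Fintype.card_fin, nsmul_eq_mul, ← Finset.mul_sum, ← EuclideanSpace.real_norm_sq_eq,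
    add_right_inj]
  have : ‖x‖ ≠ 0 := norm_ne_zero_iff.mpr hx
  field_simp

theorem mLap_comp_norm {N : ℕ} {m : ℝ} {f f' : ℝ → ℝ} {g' : ℝ} {x : EuclideanSpace ℝ (Fin N)}
    (hx : x ≠ 0) (hf : ∀ᶠ t in 𝓝 ‖x‖, HasDerivAt f (f' t) t)
    (hg : HasDerivAt (fun t => |f' t| ^ (m - 2) * f' t) g' ‖x‖) :
    mLap m (fun y => f ‖y‖) x = g' + (N - 1) * (|f' ‖x‖| ^ (m - 2) * f' ‖x‖) / ‖x‖ := by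
  have hr : ‖x‖ ≠ 0 := norm_ne_zero_iff.mpr hx
  have hflux : (fun y => ‖gradient (fun y => f ‖y‖) y‖ ^ (m - 2) • gradient (fun y => f ‖y‖) y)
      =ᶠ[𝓝 x] fun y => ((|f' ‖y‖| ^ (m - 2) * f' ‖y‖) / ‖y‖) • y := by
    filter_upwards [continuous_norm.continuousAt.eventually hf, eventually_ne_nhds hx]
      with y hfy hy
    have hy' : ‖y‖ ≠ 0 := norm_ne_zero_iff.mpr hy
    rw [(hfy.hasGradientAt_comp_norm hy).gradient, norm_smul, norm_div, norm_norm,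
      div_mul_cancel₀ _ hy', smul_smul, Real.norm_eq_abs, mul_div_assoc]
  rw [mLap, vdiv_radial (ψ := fun t => (|f' t| ^ (m - 2) * f' t) / t) hx
    (hg.div (hasDerivAt_id _) hr) hflux]
  field_simp
  ring

theorem mLap_rpow_sub_norm {N : ℕ} {m R d : ℝ} (hd : 0 < d) {x : EuclideanSpace ℝ (Fin N)}
    (hx : x ≠ 0) (hxR : ‖x‖ < R) :
    mLap m (fun y => (R - ‖y‖) ^ d) x = d ^ (m - 1) * (R - ‖x‖) ^ ((d - 1) * (m - 1) - 1) *
      ((d - 1) * (m - 1) - (N - 1) * (R - ‖x‖) / ‖x‖) := by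
  set α := (d - 1) * (m - 1)
  have hR : ∀ᶠ t in 𝓝 ‖x‖, t < R := Iio_mem_nhds hxR
  have hf : ∀ᶠ t in 𝓝 ‖x‖, HasDerivAt (fun t => (R - t) ^ d) (-(d * (R - t) ^ (d - 1))) t := by
    filter_upwards [hR] with t ht
    convert ((hasDerivAt_id' t).const_sub R).rpow_const (p := d) (Or.inl (sub_pos.2 ht).ne') using 1
    ring
  have hflux : ∀ t < R, |-(d * (R - t) ^ (d - 1))| ^ (m - 2) * -(d * (R - t) ^ (d - 1)) =
      -(d ^ (m - 1) * (R - t) ^ α) := by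
    intro t ht
    have hRt : 0 < R - t := sub_pos.2 ht
    have ha : 0 < d * (R - t) ^ (d - 1) := by positivity
    rw [abs_neg, abs_of_pos ha, mul_neg, neg_inj, ← rpow_add_one ha.ne',
      mul_rpow hd.le (by positivity), ← rpow_mul hRt.le, show m - 2 + 1 = m - 1 by ring]
  have hg : HasDerivAt (fun t => |-(d * (R - t) ^ (d - 1))| ^ (m - 2) * -(d * (R - t) ^ (d - 1)))
      (d ^ (m - 1) * α * (R - ‖x‖) ^ (α - 1)) ‖x‖ := by
    have := ((((hasDerivAt_id' ‖x‖).const_sub R).rpow_const (p := α)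
      (Or.inl (sub_pos.2 hxR).ne')).const_mul (d ^ (m - 1))).neg
    refine (this.congr_deriv (by ring)).congr_of_eventuallyEq ?_
    filter_upwards [hR] with t ht using hflux t ht
  have hRx : R - ‖x‖ ≠ 0 := (sub_pos.2 hxR).ne'
  have : ‖x‖ ≠ 0 := norm_ne_zero_iff.mpr hx
  rw [mLap_comp_norm hx hf hg, hflux _ hxR, rpow_sub_one hRx]
  field_simp
  ring

theorem antitoneOn_sub_div_self {R : ℝ} (hR : 0 ≤ R) :
    AntitoneOn (fun r => (R - r) / r) (Set.Ioi 0) := by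
  intro a (ha : 0 < a) b (hb : 0 < b) hab
  simp only [sub_div, div_self ha.ne', div_self hb.ne']
  gcongr

theorem stmt8 (N : ℕ) (hN : 1 < N) (m : ℝ) (hm : 1 < m) (R₁ R₂ d : ℝ)
    (hR₁ : 0 < R₁) (hR : R₁ < R₂)
    (hd : d = ((N : ℝ) - 1) * (R₂ - R₁) / ((m - 1) * R₁) + 1) :
    (∀ x : EuclideanSpace ℝ (Fin N), R₁ < ‖x‖ → ‖x‖ < R₂ →
      -mLap m (fun y : EuclideanSpace ℝ (Fin N) => (R₂ - ‖y‖) ^ d) x ≤ 0) ∧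
    (∀ x : EuclideanSpace ℝ (Fin N), ‖x‖ = R₁ → (R₂ - ‖x‖) ^ d ≤ (R₂ - R₁) ^ d) ∧
    (∀ x : EuclideanSpace ℝ (Fin N), ‖x‖ = R₂ → (R₂ - ‖x‖) ^ d = 0) := by
  have hN₁ : (0 : ℝ) ≤ N - 1 := by
    have : (1 : ℝ) < N := by exact_mod_cast hN
    linarith
  have hm₁ : 0 < m - 1 := sub_pos.2 hm
  have hd₀ : 0 < d := by
    rw [hd]
    have := div_nonneg (mul_nonneg hN₁ (sub_pos.2 hR).le) (mul_pos hm₁ hR₁).le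
    linarith
  have hα : (d - 1) * (m - 1) = (N - 1) * ((R₂ - R₁) / R₁) := by
    rw [hd]
    field_simp
    ring
  refine ⟨fun x hx₁ hx₂ => ?_, fun x hx => by rw [hx], fun x hx => by
    rw [hx, sub_self, zero_rpow hd₀.ne']⟩
  have hx : x ≠ 0 := norm_pos_iff.mp (hR₁.trans hx₁)
  have hdecr := antitoneOn_sub_div_self (hR₁.trans hR).le hR₁ (hR₁.trans hx₁) hx₁.le
  rw [neg_nonpos, mLap_rpow_sub_norm hd₀ hx hx₂, hα, mul_div_assoc]
  exact mul_nonneg (mul_nonneg (rpow_nonneg hd₀.le _) (rpow_nonneg (sub_pos.2 hx₂).le _))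
    (sub_nonneg.2 (mul_le_mul_of_nonneg_left hdecr hN₁))
end

section
/- Let N > m > 1 and let u be a positive C² radial function on {x ∈ ℝ^N : |x| > R} with u_r < 0, satisfying the radial m-Laplace inequality -(r^{N-1}|u_r|^{m-2}u_r)_r ≥ r^{N-1} u^p with p > m-1, for all r > r_l > R. Then for r > 2r_l, r^{N-1}|u_r(r)|^{m-1} ≥ r^N u(r)^p / (2N), and consequently (u^{-(p-m+1)/(m-1)})_r ≥ ((p-m+1)/(m-1)) (r/(2N))^{1/(m-1)}. -/
/-!
Write `F(s) = s^(N-1) |u'(s)|^(m-2) u'(s)` for the flux, so that `F = -s^(N-1) |u'|^(m-1) < 0`.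
Since `u` decreases, `u(s)^p ≥ u(r)^p` on `[r/2, r]`, so there `F' ≤ -u(r)^p s^(N-1)`; integrating,
`-F(r) ≥ -F(r/2) + u(r)^p (r^N - (r/2)^N) / N ≥ u(r)^p r^N / (2N)` because `(r/2)^N ≤ r^N/2` for
`N ≥ 1`. Taking the `(m-1)`-th root gives `|u'| ≥ (r/(2N))^(1/(m-1)) u^(p/(m-1))`, which is exactly
the lower bound on the derivative of `u^(-(p-m+1)/(m-1))` by the chain rule.
-/

open Real Set

lemma sub_le_sub_of_deriv_le {f g : ℝ → ℝ} {a b : ℝ} (hab : a ≤ b)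
    (hf : ∀ x ∈ Icc a b, DifferentiableAt ℝ f x) (hg : ∀ x ∈ Icc a b, DifferentiableAt ℝ g x)
    (h : ∀ x ∈ Ioo a b, deriv f x ≤ deriv g x) : f b - f a ≤ g b - g a := by
  have hfg : ∀ x ∈ Icc a b, DifferentiableAt ℝ (fun y => f y - g y) x :=
    fun x hx => (hf x hx).sub (hg x hx)
  have hanti : AntitoneOn (fun y => f y - g y) (Icc a b) := by
    refine antitoneOn_of_deriv_nonpos (convex_Icc a b)
      (fun x hx => (hfg x hx).continuousAt.continuousWithinAt) ?_ ?_ <;>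
      intro x hx <;> rw [interior_Icc] at hx
    · exact (hfg x (Ioo_subset_Icc_self hx)).differentiableWithinAt
    · rw [deriv_fun_sub (hf x (Ioo_subset_Icc_self hx)) (hg x (Ioo_subset_Icc_self hx))]
      exact sub_nonpos.2 (h x hx)
  linarith [hanti (left_mem_Icc.2 hab) (right_mem_Icc.2 hab) hab]

lemma strictAntiOn_of_forall_deriv_neg {f : ℝ → ℝ} {D : Set ℝ} (hD : Convex ℝ D)
    (h : ∀ x ∈ D, deriv f x < 0) : StrictAntiOn f D :=
  strictAntiOn_of_deriv_neg hD
    (fun x hx => (differentiableAt_of_deriv_ne_zero (h x hx).ne).continuousAt.continuousWithinAt)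
    (fun x hx => h x (interior_subset hx))

lemma rpow_half_le {r N : ℝ} (hr : 0 ≤ r) (hN : 1 ≤ N) : (r / 2) ^ N ≤ r ^ N / 2 := by
  have h : (1 / 2 : ℝ) ^ N ≤ 1 / 2 := by
    simpa using rpow_le_rpow_of_exponent_ge (by norm_num : (0 : ℝ) < 1 / 2) (by norm_num) hN
  rw [div_eq_mul_one_div r, mul_rpow hr (by norm_num)]
  nlinarith [rpow_nonneg hr N]

lemma abs_rpow_sub_two_mul_self_of_neg {v m : ℝ} (hv : v < 0) :
    |v| ^ (m - 2) * v = -|v| ^ (m - 1) := by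
  rw [show m - 1 = m - 2 + 1 by ring, rpow_add_one (abs_pos.2 hv.ne).ne', abs_of_neg hv]
  ring

lemma neg_le_of_forall_rpow_mul_rpow_le_neg_deriv {F u : ℝ → ℝ} {N p r : ℝ} (hN : 1 ≤ N)
    (hp : 0 ≤ p) (hr : 0 < r) (hur : 0 < u r) (hu : AntitoneOn u (Icc (r / 2) r))
    (hF : ∀ s ∈ Icc (r / 2) r, s ^ (N - 1) * u s ^ p ≤ -deriv F s) (hF₀ : F (r / 2) ≤ 0) :
    r ^ N * u r ^ p / (2 * N) ≤ -F r := by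
  have hpos : ∀ s ∈ Icc (r / 2) r, 0 < s := fun s hs => by linarith [hs.1]
  have hF' : ∀ s ∈ Icc (r / 2) r, u r ^ p * s ^ (N - 1) ≤ -deriv F s := fun s hs =>
    calc u r ^ p * s ^ (N - 1) ≤ u s ^ p * s ^ (N - 1) := by
          have := hpos s hs
          gcongr
          exact hu hs (right_mem_Icc.2 (by linarith)) hs.2
      _ ≤ -deriv F s := by rw [mul_comm]; exact hF s hs
  -- `deriv F s` is nonzero, which the junk value `0` rules out at points of non-differentiability
  have hFdiff : ∀ s ∈ Icc (r / 2) r, DifferentiableAt ℝ F s := fun s hs => by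
    have : 0 < u r ^ p * s ^ (N - 1) := by have := hpos s hs; positivity
    exact differentiableAt_of_deriv_ne_zero (by linarith [hF' s hs])
  have hg : ∀ s ∈ Icc (r / 2) r,
      HasDerivAt (fun s => -(u r ^ p * s ^ N / N)) (-(u r ^ p * s ^ (N - 1))) s := by
    intro s hs
    refine (((hasDerivAt_rpow_const (p := N) (Or.inl (hpos s hs).ne')).const_mul
      (u r ^ p)).div_const N).fun_neg.congr_deriv ?_
    rw [mul_div_assoc, mul_div_cancel_left₀ _ (by linarith : N ≠ 0)]
  have hcomp := sub_le_sub_of_deriv_le (half_le_self hr.le) hFdiff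
    (fun s hs => (hg s hs).differentiableAt) fun s hs => by
      rw [(hg s (Ioo_subset_Icc_self hs)).deriv]
      linarith [hF' s (Ioo_subset_Icc_self hs)]
  have hhalf : u r ^ p * (r / 2) ^ N / N ≤ u r ^ p * (r ^ N / 2) / N := by
    gcongr
    exact rpow_half_le hr.le hN
  have hid : r ^ N * u r ^ p / (2 * N) = u r ^ p * r ^ N / N - u r ^ p * (r ^ N / 2) / N := by
    field_simp
    ring
  linarith

lemma le_deriv_rpow_of_mul_rpow_le_abs_deriv {u : ℝ → ℝ} {r m p A : ℝ} (hm : 1 < m)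
    (hp : m - 1 ≤ p) (hA : 0 ≤ A) (hu : 0 < u r) (hu' : deriv u r < 0)
    (h : A * u r ^ p ≤ |deriv u r| ^ (m - 1)) :
    (p - m + 1) / (m - 1) * A ^ (1 / (m - 1)) ≤
      deriv (fun s => u s ^ (-(p - m + 1) / (m - 1))) r := by
  have hm1 : 0 < m - 1 := by linarith
  have hd : HasDerivAt (fun s => u s ^ (-(p - m + 1) / (m - 1)))
      (deriv u r * (-(p - m + 1) / (m - 1)) * u r ^ (-(p - m + 1) / (m - 1) - 1)) r :=
    (differentiableAt_of_deriv_ne_zero hu'.ne).hasDerivAt.rpow_const (Or.inl hu.ne')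
  have hroot : A ^ (1 / (m - 1)) * u r ^ (p / (m - 1)) ≤ -deriv u r := by
    rw [← abs_of_neg hu', div_eq_mul_one_div p, rpow_mul hu.le, ← mul_rpow hA (by positivity),
      one_div, rpow_inv_le_iff_of_pos (by positivity) (abs_nonneg _) hm1]
    exact h
  have hexp : -(p - m + 1) / (m - 1) - 1 = -(p / (m - 1)) := by
    field_simp
    ring
  rw [hd.deriv, hexp]
  have hq : 0 ≤ (p - m + 1) / (m - 1) := div_nonneg (by linarith) hm1.le
  calc (p - m + 1) / (m - 1) * A ^ (1 / (m - 1))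
      = (p - m + 1) / (m - 1) * (A ^ (1 / (m - 1)) * u r ^ (p / (m - 1))) *
          u r ^ (-(p / (m - 1))) := by
        rw [mul_assoc, mul_assoc, ← rpow_add hu]
        simp
    _ ≤ (p - m + 1) / (m - 1) * -deriv u r * u r ^ (-(p / (m - 1))) := by gcongr
    _ = _ := by ring

theorem stmt9_general (N m p R rl : ℝ) (hm : 1 < m) (hN : m < N) (hp : m - 1 < p)
    (hR : 0 < R) (hrl : R < rl) (u : ℝ → ℝ)
    (hpos : ∀ r, R < r → 0 < u r)
    (hdec : ∀ r, R < r → deriv u r < 0)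
    (hineq : ∀ r, rl < r →
      r ^ (N - 1) * u r ^ p ≤
        -(deriv (fun s => s ^ (N - 1) * |deriv u s| ^ (m - 2) * deriv u s) r)) :
    ∀ r, 2 * rl < r →
      r ^ N * u r ^ p / (2 * N) ≤ r ^ (N - 1) * |deriv u r| ^ (m - 1) ∧
      (p - m + 1) / (m - 1) * (r / (2 * N)) ^ (1 / (m - 1)) ≤
        deriv (fun s => u s ^ (-(p - m + 1) / (m - 1))) r := by
  intro r hr
  have hr0 : 0 < r := by linarith
  have hN0 : 0 < N := by linarith
  have hflux : ∀ s, R < s → s ^ (N - 1) * |deriv u s| ^ (m - 2) * deriv u s =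
      -(s ^ (N - 1) * |deriv u s| ^ (m - 1)) := fun s hs => by
    rw [mul_assoc, abs_rpow_sub_two_mul_self_of_neg (hdec s hs), mul_neg]
  have hsub : Icc (r / 2) r ⊆ Ioi rl := fun s hs => show rl < s by linarith [hs.1]
  have hbound : r ^ N * u r ^ p / (2 * N) ≤ r ^ (N - 1) * |deriv u r| ^ (m - 1) := by
    have := neg_le_of_forall_rpow_mul_rpow_le_neg_deriv (by linarith) (by linarith) hr0
      (hpos r (by linarith))
      ((strictAntiOn_of_forall_deriv_neg (convex_Ioi R) hdec).antitoneOn.mono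
        (hsub.trans (Ioi_subset_Ioi hrl.le)))
      (fun s hs => hineq s (hsub hs)) ?_
    · rwa [hflux r (by linarith), neg_neg] at this
    · rw [hflux _ (by linarith)]
      exact neg_nonpos.2 (by positivity)
  refine ⟨hbound, le_deriv_rpow_of_mul_rpow_le_abs_deriv hm hp.le (by positivity)
    (hpos r (by linarith)) (hdec r (by linarith)) ?_⟩
  refine (mul_le_mul_iff_right₀ (rpow_pos_of_pos hr0 (N - 1))).1 ?_
  calc r ^ (N - 1) * (r / (2 * N) * u r ^ p) = r ^ N * u r ^ p / (2 * N) := by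
        rw [rpow_sub_one hr0.ne']
        field_simp
    _ ≤ _ := hbound

theorem stmt9 (N m p R rl : ℝ) (hm : 1 < m) (hN : m < N) (hp : m - 1 < p)
    (hR : 0 < R) (hrl : R < rl) (u : ℝ → ℝ)
    (hreg : ContDiffOn ℝ 2 u (Set.Ioi R))
    (hpos : ∀ r, R < r → 0 < u r)
    (hdec : ∀ r, R < r → deriv u r < 0)
    (hineq : ∀ r, rl < r →
      r ^ (N - 1) * u r ^ p ≤
        -(deriv (fun s => s ^ (N - 1) * |deriv u s| ^ (m - 2) * deriv u s) r)) :
    ∀ r, 2 * rl < r →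
      r ^ N * u r ^ p / (2 * N) ≤ r ^ (N - 1) * |deriv u r| ^ (m - 1) ∧
      (p - m + 1) / (m - 1) * (r / (2 * N)) ^ (1 / (m - 1)) ≤
        deriv (fun s => u s ^ (-(p - m + 1) / (m - 1))) r :=
  stmt9_general N m p R rl hm hN hp hR hrl u hpos hdec hineq
end

section
/- Let N > 1, m > 1, M > 0, and q > N(m-1)/(N-1). Suppose w : (r_l, ∞) → (0, ∞) is C¹ and satisfies w_r ≥ M r^{-(N-1)(q-m+1)/(m-1)} w^{q/(m-1)} and w(r) → l ∈ (0, ∞] as r → ∞. Then for all s > r_l sufficiently large, w(s) ≤ ((q(N-1) - N(m-1))/(M(q-m+1)))^{(m-1)/(q-m+1)} s^{(q(N-1)-N(m-1))/(q-m+1)}. -/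
open Real Filter Set Topology

/-!
With `α = (q - m + 1)/(m - 1)` and `β = (N - 1)(q - m + 1)/(m - 1) > 1` the hypothesis reads
`w' ≥ M r^(-β) w^(α + 1)`, i.e. `(w^(-α))' ≤ -α M r^(-β)`. Hence
`w^(-α) - α M/(β - 1) · r^(1 - β)` is nonincreasing, and it tends to a nonnegative limit since
`w^(-α) > 0` and `r^(1 - β) → 0`. So `w(s)^(-α) ≥ α M/(β - 1) · s^(1 - β)` for every `s > r_l`,
which inverts to the claimed bound.
-/

section DifferentialInequality

variable {w : ℝ → ℝ} {a α β rl : ℝ}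

lemma antitoneOn_rpow_neg_sub_mul_rpow (hα : 0 < α) (hβ : β ≠ 1) (hrl : 0 ≤ rl)
    (hw : DifferentiableOn ℝ w (Ioi rl)) (hpos : ∀ r ∈ Ioi rl, 0 < w r)
    (hineq : ∀ r ∈ Ioi rl, a * r ^ (-β) * w r ^ (α + 1) ≤ deriv w r) :
    AntitoneOn (fun r ↦ w r ^ (-α) - α * a / (β - 1) * r ^ (1 - β)) (Ioi rl) := by
  have hderiv : ∀ x ∈ Ioi rl, HasDerivAt (fun r ↦ w r ^ (-α) - α * a / (β - 1) * r ^ (1 - β))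
      (α * (a * x ^ (-β) - w x ^ (-α - 1) * deriv w x)) x := by
    intro x hx
    have hw' := (hw.differentiableAt (Ioi_mem_nhds hx)).hasDerivAt
    refine ((hw'.rpow_const (Or.inl (hpos x hx).ne')).sub
      ((hasDerivAt_rpow_const (Or.inl (hrl.trans_lt hx).ne')).const_mul
        (α * a / (β - 1)))).congr_deriv ?_
    rw [show 1 - β - 1 = -β by ring]
    field_simp [sub_ne_zero.2 hβ]
    ring
  refine antitoneOn_of_hasDerivWithinAt_nonpos (convex_Ioi rl)
    (fun x hx ↦ (hderiv x hx).continuousAt.continuousWithinAt)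
    (by simpa only [interior_Ioi] using fun x hx ↦ (hderiv x hx).hasDerivWithinAt) ?_
  rw [interior_Ioi]
  intro x hx
  have hw_pos := hpos x hx
  have : a * x ^ (-β) ≤ w x ^ (-α - 1) * deriv w x :=
    calc a * x ^ (-β) = w x ^ (-α - 1) * (a * x ^ (-β) * w x ^ (α + 1)) := by
          rw [mul_left_comm, ← rpow_add hw_pos, show -α - 1 + (α + 1) = 0 by ring, rpow_zero,
            mul_one]
      _ ≤ w x ^ (-α - 1) * deriv w x := by gcongr; exact hineq x hx
  exact mul_nonpos_of_nonneg_of_nonpos hα.le (by linarith)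

lemma mul_rpow_le_rpow_neg_of_deriv_ge (hα : 0 < α) (hβ : 1 < β) (hrl : 0 ≤ rl)
    (hw : DifferentiableOn ℝ w (Ioi rl)) (hpos : ∀ r ∈ Ioi rl, 0 < w r)
    (hineq : ∀ r ∈ Ioi rl, a * r ^ (-β) * w r ^ (α + 1) ≤ deriv w r) {s : ℝ} (hs : rl < s) :
    α * a / (β - 1) * s ^ (1 - β) ≤ w s ^ (-α) := by
  have hanti := antitoneOn_rpow_neg_sub_mul_rpow hα hβ.ne' hrl hw hpos hineq
  have hdecay : Tendsto (fun R : ℝ ↦ α * a / (β - 1) * R ^ (1 - β)) atTop (𝓝 0) := by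
    simpa [neg_sub] using (tendsto_rpow_neg_atTop (sub_pos.2 hβ)).const_mul (α * a / (β - 1))
  suffices α * a / (β - 1) * s ^ (1 - β) - w s ^ (-α) ≤ 0 by linarith
  refine ge_of_tendsto hdecay ?_
  filter_upwards [eventually_ge_atTop s] with R hR
  have hR_pos := (hpos R (hs.trans_le hR)).le
  have := hanti hs (hs.trans_le hR) hR
  simp only at this
  linarith [rpow_nonneg hR_pos (-α)]

lemma le_rpow_mul_rpow_of_deriv_ge (hα : 0 < α) (hβ : 1 < β) (ha : 0 < a) (hrl : 0 ≤ rl)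
    (hw : DifferentiableOn ℝ w (Ioi rl)) (hpos : ∀ r ∈ Ioi rl, 0 < w r)
    (hineq : ∀ r ∈ Ioi rl, a * r ^ (-β) * w r ^ (α + 1) ≤ deriv w r) {s : ℝ} (hs : rl < s) :
    w s ≤ ((β - 1) / (α * a)) ^ α⁻¹ * s ^ ((β - 1) / α) := by
  have hs0 : 0 < s := hrl.trans_lt hs
  have hc : 0 < α * a / (β - 1) := div_pos (mul_pos hα ha) (sub_pos.2 hβ)
  have key := (le_rpow_inv_iff_of_neg (hpos s hs) (mul_pos hc (rpow_pos_of_pos hs0 (1 - β)))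
    (neg_neg_of_pos hα)).2 (mul_rpow_le_rpow_neg_of_deriv_ge hα hβ hrl hw hpos hineq hs)
  rwa [mul_rpow hc.le (rpow_nonneg hs0.le _), ← rpow_mul hs0.le, inv_neg, rpow_neg hc.le,
    ← inv_rpow hc.le, inv_div, show (1 - β) * -α⁻¹ = (β - 1) / α by ring] at key

end DifferentialInequality

theorem stmt14_general (N m M q rl : ℝ) (hN : 1 < N) (hm : 1 < m) (hM : 0 < M) (hrl : 0 < rl)
    (hq : N * (m - 1) / (N - 1) < q)
    (w : ℝ → ℝ) (hreg : ContDiffOn ℝ 1 w (Set.Ioi rl))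
    (hpos : ∀ r, rl < r → 0 < w r)
    (hineq : ∀ r, rl < r →
      M * r ^ (-(N - 1) * (q - m + 1) / (m - 1)) * w r ^ (q / (m - 1)) ≤ deriv w r) :
    ∃ s₀, rl < s₀ ∧ ∀ s, s₀ < s →
      w s ≤ ((q * (N - 1) - N * (m - 1)) / (M * (q - m + 1))) ^ ((m - 1) / (q - m + 1))
        * s ^ ((q * (N - 1) - N * (m - 1)) / (q - m + 1)) := by
  have hm₁ : 0 < m - 1 := by linarith
  have hD : 0 < q * (N - 1) - N * (m - 1) := by
    have := (div_lt_iff₀ (sub_pos.2 hN)).1 hq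
    linarith
  have hqm : 0 < q - m + 1 := by nlinarith
  have hβ : 1 < (N - 1) * (q - m + 1) / (m - 1) := by
    rw [one_lt_div hm₁]
    linarith
  have hineq' : ∀ r ∈ Ioi rl, M * r ^ (-((N - 1) * (q - m + 1) / (m - 1))) *
      w r ^ ((q - m + 1) / (m - 1) + 1) ≤ deriv w r := by
    intro r hr
    convert hineq r hr using 4
    · ring
    · field_simp
      ring
  refine ⟨rl + 1, by linarith, fun s hs ↦ ?_⟩
  convert le_rpow_mul_rpow_of_deriv_ge (div_pos hqm hm₁) hβ hM hrl.le
    (hreg.differentiableOn one_ne_zero) hpos hineq' (s := s) (by linarith) using 3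
  · field_simp
    ring
  · rw [inv_div]
  · field_simp
    ring

theorem stmt14 (N m M q rl : ℝ) (hN : 1 < N) (hm : 1 < m) (hM : 0 < M) (hrl : 0 < rl)
    (hq : N * (m - 1) / (N - 1) < q)
    (w : ℝ → ℝ) (hreg : ContDiffOn ℝ 1 w (Set.Ioi rl))
    (hpos : ∀ r, rl < r → 0 < w r)
    (hineq : ∀ r, rl < r →
      M * r ^ (-(N - 1) * (q - m + 1) / (m - 1)) * w r ^ (q / (m - 1)) ≤ deriv w r)
    (hlim : (∃ l : ℝ, 0 < l ∧ Tendsto w atTop (nhds l)) ∨ Tendsto w atTop atTop) :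
    ∃ s₀, rl < s₀ ∧ ∀ s, s₀ < s →
      w s ≤ ((q * (N - 1) - N * (m - 1)) / (M * (q - m + 1))) ^ ((m - 1) / (q - m + 1))
        * s ^ ((q * (N - 1) - N * (m - 1)) / (q - m + 1)) :=
  stmt14_general N m M q rl hN hm hM hrl hq w hreg hpos hineq
end

section
/- Let N > 1, m > 1, M > 0 and m-1 < q ≤ N(m-1)/(N-1). Suppose w : (r_l, ∞) → (0, ∞) is C¹ and satisfies w_r ≥ M r^{-(N-1)(q-m+1)/(m-1)} w^{q/(m-1)} on (r_l, ∞). Then w cannot have a finite positive limit nor tend to +∞ as r → ∞; in fact no such positive w exists on any interval (r_l, ∞). -/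
/-!
With `α = (q - m + 1) / (m - 1) > 0` we have `q / (m - 1) = α + 1`, and the upper bound on `q` says
exactly that the weight exponent `-(N - 1) α` is at least `-1`. Hence for `r ≥ 1` the function
`v = w ^ (-α)` satisfies `v' = -α w ^ (-α - 1) w' ≤ -α M r ^ (-(N - 1) α) ≤ -α M / r`, so
`v + α M log r` is nonincreasing and `v → -∞`, contradicting `v > 0`.
-/

open Real Set Filter

lemma antitoneOn_add_mul_log_of_deriv_le {u : ℝ → ℝ} {a c : ℝ} (ha : 0 ≤ a)
    (hdiff : ∀ r, a < r → DifferentiableAt ℝ u r) (hderiv : ∀ r, a < r → deriv u r ≤ -c / r) :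
    AntitoneOn (fun r => u r + c * log r) (Ioi a) := by
  have hlog : ∀ r, a < r → HasDerivAt (fun r => c * log r) (c * r⁻¹) r := fun r hr =>
    (hasDerivAt_log (by linarith)).const_mul c
  have hsum : ∀ r, a < r → HasDerivAt (fun r => u r + c * log r) (deriv u r + c * r⁻¹) r :=
    fun r hr => (hdiff r hr).hasDerivAt.add (hlog r hr)
  apply antitoneOn_of_deriv_nonpos (convex_Ioi a)
  · exact fun r hr => (hsum r hr).continuousAt.continuousWithinAt
  · rw [interior_Ioi]
    exact fun r hr => (hsum r hr).differentiableAt.differentiableWithinAt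
  · rw [interior_Ioi]
    intro r hr
    rw [(hsum r hr).deriv]
    have := hderiv r hr
    rw [neg_div, div_eq_mul_inv] at this
    linarith

lemma tendsto_atBot_of_deriv_le_neg_div {u : ℝ → ℝ} {a c : ℝ} (hc : 0 < c)
    (hdiff : ∀ r, a < r → DifferentiableAt ℝ u r) (hderiv : ∀ r, a < r → deriv u r ≤ -c / r) :
    Tendsto u atTop atBot := by
  set b := max a 0
  have hanti : AntitoneOn (fun r => u r + c * log r) (Ioi b) :=
    antitoneOn_add_mul_log_of_deriv_le (le_max_right a 0)
      (fun r hr => hdiff r (lt_of_le_of_lt (le_max_left a 0) hr))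
      (fun r hr => hderiv r (lt_of_le_of_lt (le_max_left a 0) hr))
  set r₀ := b + 1
  have hbound : ∀ᶠ r in atTop, u r ≤ (u r₀ + c * log r₀) + -(c * log r) := by
    filter_upwards [eventually_ge_atTop r₀] with r hr
    have := hanti (show b < r₀ by simp [r₀]) (show b < r by simp [r₀] at hr ⊢; linarith) hr
    simp only at this
    linarith
  refine tendsto_atBot_mono' _ hbound (tendsto_atBot_add_const_left _ _ ?_)
  exact tendsto_neg_atTop_atBot.comp (tendsto_log_atTop.const_mul_atTop hc)

/-- The substitution `v = w ^ (-α)` linearizes the Bernoulli-type inequality `w' ≥ K w ^ (α + 1)`. -/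
lemma deriv_rpow_neg_le {w : ℝ → ℝ} {α K r : ℝ} (hw : DifferentiableAt ℝ w r) (hpos : 0 < w r)
    (hα : 0 ≤ α) (hK : K * w r ^ (α + 1) ≤ deriv w r) :
    deriv (fun x => w x ^ (-α)) r ≤ -(α * K) := by
  rw [(hw.hasDerivAt.rpow_const (Or.inl hpos.ne')).deriv]
  have hcancel : w r ^ (α + 1) * w r ^ (-α - 1) = 1 := by
    rw [← rpow_add hpos]; norm_num
  have hscale : 0 ≤ α * w r ^ (-α - 1) := mul_nonneg hα (rpow_nonneg hpos.le _)
  calc deriv w r * -α * w r ^ (-α - 1) = -(deriv w r * (α * w r ^ (-α - 1))) := by ring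
    _ ≤ -(K * w r ^ (α + 1) * (α * w r ^ (-α - 1))) :=
        neg_le_neg (mul_le_mul_of_nonneg_right hK hscale)
    _ = -(α * K) := by linear_combination (-(α * K)) * hcancel

theorem stmt15_general (N m M q rl : ℝ) (hN : 1 < N) (hm : 1 < m) (hM : 0 < M)
    (hq1 : m - 1 < q) (hq2 : q ≤ N * (m - 1) / (N - 1))
    (w : ℝ → ℝ) (hreg : ContDiffOn ℝ 1 w (Set.Ioi rl))
    (hpos : ∀ r, rl < r → 0 < w r)
    (hineq : ∀ r, rl < r →
      M * r ^ (-(N - 1) * (q - m + 1) / (m - 1)) * w r ^ (q / (m - 1)) ≤ deriv w r) :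
    False := by
  set α := (q - m + 1) / (m - 1)
  have hα : 0 < α := div_pos (by linarith) (by linarith)
  have hq : q / (m - 1) = α + 1 := by
    simp only [α]; field_simp [(by linarith : (m - 1 : ℝ) ≠ 0)]; ring
  have hexp : -1 ≤ -(N - 1) * (q - m + 1) / (m - 1) := by
    rw [le_div_iff₀ (by linarith : (0 : ℝ) < m - 1)]
    rw [le_div_iff₀ (by linarith : (0 : ℝ) < N - 1)] at hq2
    linarith
  have hdiff : ∀ r, rl < r → DifferentiableAt ℝ w r := fun r hr =>
    (hreg.differentiableOn one_ne_zero r hr).differentiableAt (Ioi_mem_nhds hr)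
  have hpow_diff : ∀ r, max rl 1 < r → DifferentiableAt ℝ (fun x => w x ^ (-α)) r := fun r hr =>
    (hdiff r (lt_of_le_of_lt (le_max_left _ _) hr)).rpow_const
      (Or.inl (hpos r (lt_of_le_of_lt (le_max_left _ _) hr)).ne')
  have hpow_deriv : ∀ r, max rl 1 < r → deriv (fun x => w x ^ (-α)) r ≤ -(α * M) / r := by
    intro r hr
    have hrl : rl < r := lt_of_le_of_lt (le_max_left _ _) hr
    have hinv : r⁻¹ ≤ r ^ (-(N - 1) * (q - m + 1) / (m - 1)) := by
      rw [← rpow_neg_one r]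
      exact rpow_le_rpow_of_exponent_le ((le_max_right _ _).trans hr.le) hexp
    have := deriv_rpow_neg_le (hdiff r hrl) (hpos r hrl) hα.le (hq ▸ hineq r hrl)
    rw [neg_div, div_eq_mul_inv]
    linarith [mul_le_mul_of_nonneg_left hinv (mul_pos hα hM).le]
  have hlim : Tendsto (fun r => w r ^ (-α)) atTop atBot :=
    tendsto_atBot_of_deriv_le_neg_div (mul_pos hα hM) hpow_diff hpow_deriv
  obtain ⟨r, hr, hneg⟩ := ((eventually_gt_atTop rl).and (hlim.eventually_lt_atBot 0)).exists
  exact (rpow_pos_of_pos (hpos r hr) _).not_gt hneg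

theorem stmt15 (N m M q rl : ℝ) (hN : 1 < N) (hm : 1 < m) (hM : 0 < M) (hrl : 0 < rl)
    (hq1 : m - 1 < q) (hq2 : q ≤ N * (m - 1) / (N - 1))
    (w : ℝ → ℝ) (hreg : ContDiffOn ℝ 1 w (Set.Ioi rl))
    (hpos : ∀ r, rl < r → 0 < w r)
    (hineq : ∀ r, rl < r →
      M * r ^ (-(N - 1) * (q - m + 1) / (m - 1)) * w r ^ (q / (m - 1)) ≤ deriv w r) :
    False :=
  stmt15_general N m M q rl hN hm hM hq1 hq2 w hreg hpos hineq
end
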